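/- arXiv:2603.23581 — 4 statements merged into one kernel-verified Lean document; each statement's English description precedes it below -/
import Mathlib

section
/- The Mass Agreement Score U = ∑_i (n_i/N)·(1 − |n_i − S_i|/N) satisfies 0 < U ≤ 1 for every partition with at least two nonempty clusters. -/
open Finset

/-- The Mass Agreement Score `U = ∑ i, (n i / N) * (1 - |n i - S i| / N)`, with
`S i = (∑ j, n j ^ 2 - n i ^ 2) / (N - n i)`, satisfies `0 < U ≤ 1` for every partition
with at least two nonempty clusters. -/
theorem mas_mem_Ioc (K N : ℕ) (hK : 2 ≤ K) (n : Fin K → ℕ)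
    (hpos : ∀ i, 0 < n i) (hsum : ∑ i, n i = N) :
    0 < ∑ i, ((n i : ℝ) / N) *
        (1 - |(n i : ℝ) - ((∑ j, (n j : ℝ) ^ 2) - (n i : ℝ) ^ 2) / ((N : ℝ) - n i)| / N) ∧
    ∑ i, ((n i : ℝ) / N) *
        (1 - |(n i : ℝ) - ((∑ j, (n j : ℝ) ^ 2) - (n i : ℝ) ^ 2) / ((N : ℝ) - n i)| / N) ≤ 1 := by
  have hNK : K ≤ N := by
    rw [← hsum]
    calc (K : ℕ) = ∑ _i : Fin K, 1 := by simp
      _ ≤ ∑ i, n i := Finset.sum_le_sum fun i _ => hpos i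
  have hN2 : 2 ≤ N := le_trans hK hNK
  have hNR : (2:ℝ) ≤ (N:ℝ) := by exact_mod_cast hN2
  have hN0 : (0:ℝ) < N := by linarith
  have hkey : ∀ i : Fin K, n i + 1 ≤ N := by
    intro i
    haveI : Nontrivial (Fin K) := Fin.nontrivial_iff_two_le.mpr hK
    obtain ⟨j, hj⟩ := exists_ne i
    have hjmem : j ∈ (univ : Finset (Fin K)).erase i := by
      simp [Finset.mem_erase, hj]
    have h1 : n j ≤ ∑ k ∈ (univ : Finset (Fin K)).erase i, n k :=
      Finset.single_le_sum (fun k _ => Nat.zero_le _) hjmem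
    have h2 : (∑ k ∈ (univ : Finset (Fin K)).erase i, n k) + n i = N := by
      rw [Finset.sum_erase_add _ _ (mem_univ i), hsum]
    have := hpos j
    omega
  have habs : ∀ i : Fin K,
      |(n i : ℝ) - ((∑ j, (n j : ℝ) ^ 2) - (n i : ℝ) ^ 2) / ((N : ℝ) - n i)| ≤ (N:ℝ) - 1 := by
    intro i
    have hni1 : (1:ℝ) ≤ (n i : ℝ) := by exact_mod_cast hpos i
    have hniN : (n i : ℝ) + 1 ≤ (N:ℝ) := by exact_mod_cast hkey i
    have hM : (0:ℝ) < (N:ℝ) - n i := by linarith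
    have hsumerase : ∑ j ∈ (univ : Finset (Fin K)).erase i, (n j : ℝ) = (N:ℝ) - n i := by
      have h2 : (∑ j ∈ (univ : Finset (Fin K)).erase i, (n j : ℝ)) + (n i : ℝ)
          = ∑ j, (n j : ℝ) := Finset.sum_erase_add _ _ (mem_univ i)
      have h3 : ∑ j, (n j : ℝ) = (N:ℝ) := by exact_mod_cast congrArg (Nat.cast : ℕ → ℝ) hsum
      linarith
    have hAeq : (∑ j, (n j : ℝ) ^ 2) - (n i : ℝ) ^ 2
        = ∑ j ∈ (univ : Finset (Fin K)).erase i, (n j : ℝ) ^ 2 := by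
      have h := Finset.sum_erase_add (univ : Finset (Fin K)) (fun j => (n j : ℝ) ^ 2)
        (mem_univ i)
      linarith
    set A := ∑ j ∈ (univ : Finset (Fin K)).erase i, (n j : ℝ) ^ 2 with hA
    have hA0 : 0 ≤ A := Finset.sum_nonneg fun j _ => sq_nonneg _
    have hAle : A ≤ ((N:ℝ) - n i) ^ 2 := by
      have hstep : A ≤ ∑ j ∈ (univ : Finset (Fin K)).erase i, (n j : ℝ) * ((N:ℝ) - n i) := by
        apply Finset.sum_le_sum
        intro j hj
        have hjle : (n j : ℝ) ≤ (N:ℝ) - n i := by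
          rw [← hsumerase]
          exact Finset.single_le_sum (f := fun k => (n k : ℝ)) (fun k _ => by positivity) hj
        have hj0 : (0:ℝ) ≤ (n j : ℝ) := by positivity
        nlinarith
      calc A ≤ _ := hstep
        _ = ((N:ℝ) - n i) ^ 2 := by rw [← Finset.sum_mul, hsumerase]; ring
    have hS0 : 0 ≤ A / ((N:ℝ) - n i) := div_nonneg hA0 hM.le
    have hS1 : A / ((N:ℝ) - n i) ≤ (N:ℝ) - n i := by
      rw [div_le_iff₀ hM]; nlinarith
    rw [hAeq, abs_le]
    constructor <;> linarith
  constructor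
  · apply Finset.sum_pos
    · intro i _
      apply mul_pos
      · exact div_pos (by exact_mod_cast hpos i) hN0
      · have h1 := habs i
        have h2 : |(n i : ℝ) - ((∑ j, (n j : ℝ) ^ 2) - (n i : ℝ) ^ 2) / ((N : ℝ) - n i)| / N
            < 1 := by
          rw [div_lt_one hN0]; linarith
        linarith
    · haveI : Nonempty (Fin K) := ⟨⟨0, by omega⟩⟩
      exact univ_nonempty
  · have hle : ∀ i ∈ (univ : Finset (Fin K)),
        ((n i : ℝ) / N) *
          (1 - |(n i : ℝ) - ((∑ j, (n j : ℝ) ^ 2) - (n i : ℝ) ^ 2) / ((N : ℝ) - n i)| / N)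
        ≤ (n i : ℝ) / N := by
      intro i _
      have h0 : (0:ℝ) ≤ (n i : ℝ) / N := by positivity
      have h1 : 1 - |(n i : ℝ) - ((∑ j, (n j : ℝ) ^ 2) - (n i : ℝ) ^ 2) / ((N : ℝ) - n i)| / N
          ≤ 1 := by
        have := abs_nonneg ((n i : ℝ) - ((∑ j, (n j : ℝ) ^ 2) - (n i : ℝ) ^ 2) / ((N : ℝ) - n i))
        have : (0:ℝ) ≤ |(n i : ℝ) - ((∑ j, (n j : ℝ) ^ 2) - (n i : ℝ) ^ 2) / ((N : ℝ) - n i)| / N :=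
          by positivity
        linarith
      exact mul_le_of_le_one_right h0 h1 |>.trans_eq (by ring)
    calc _ ≤ ∑ i, (n i : ℝ) / N := Finset.sum_le_sum hle
      _ = 1 := by
        rw [← Finset.sum_div]
        have h3 : ∑ j, (n j : ℝ) = (N:ℝ) := by exact_mod_cast congrArg (Nat.cast : ℕ → ℝ) hsum
        rw [h3]; field_simp
end

section
/- If the Mass Agreement Score equals 1 for a partition with at least two nonempty clusters, then all cluster sizes are equal. -/
open Finset

/-- If the Mass Agreement Score equals `1` for a partition with at least two nonempty
clusters, then all cluster sizes are equal. -/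
theorem mas_eq_one_implies_equal_sizes (K N : ℕ) (hK : 2 ≤ K) (n : Fin K → ℕ)
    (hpos : ∀ i, 0 < n i) (hsum : ∑ i, n i = N)
    (hU : ∑ i, ((n i : ℝ) / N) *
        (1 - |(n i : ℝ) - ((∑ j, (n j : ℝ) ^ 2) - (n i : ℝ) ^ 2) / ((N : ℝ) - n i)| / N) = 1) :
    ∀ i j, n i = n j := by
  have hnt : Nontrivial (Fin K) := Fin.nontrivial_iff_two_le.mpr hK
  have hN0 : 0 < N := by
    rw [← hsum]
    exact Finset.sum_pos (fun i _ => hpos i) ⟨⟨0, by omega⟩, mem_univ _⟩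
  have hNR : (0:ℝ) < N := by exact_mod_cast hN0
  have hsub : ∀ i, (1:ℝ) ≤ (N:ℝ) - n i := by
    intro i
    obtain ⟨j, hj⟩ := exists_ne i
    have h2 : n i + n j ≤ N := by
      rw [← hsum, ← Finset.sum_pair (Ne.symm hj)]
      exact Finset.sum_le_sum_of_subset (Finset.subset_univ _)
    have := hpos j
    have : (n i : ℝ) + 1 ≤ N := by
      have : n i + 1 ≤ N := by omega
      exact_mod_cast this
    linarith
  set Q : ℝ := ∑ j, (n j:ℝ)^2 with hQ
  have hsumR : ∑ i, (n i : ℝ) = N := by exact_mod_cast hsum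
  have hterm : ∀ i ∈ Finset.univ, ((n i:ℝ)/N) *
      (1 - |(n i:ℝ) - (Q - (n i:ℝ)^2)/((N:ℝ)-n i)|/N)
      = (n i:ℝ)/N - ((n i:ℝ) * |(n i:ℝ) - (Q - (n i:ℝ)^2)/((N:ℝ)-n i)|)/(N*N) := by
    intro i _
    field_simp
  rw [Finset.sum_congr rfl hterm, Finset.sum_sub_distrib, ← Finset.sum_div, hsumR] at hU
  have hsum0 : ∑ i, ((n i:ℝ) * |(n i:ℝ) - (Q - (n i:ℝ)^2)/((N:ℝ)-n i)|)/(N*N) = 0 := by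
    have hone : (N:ℝ)/N = 1 := div_self (ne_of_gt hNR)
    rw [hone] at hU
    linarith
  have hkey : ∀ i, (n i : ℝ) * N = Q := by
    intro i
    have hz := (Finset.sum_eq_zero_iff_of_nonneg (fun i _ => by positivity)).mp hsum0 i (mem_univ i)
    have hni : (0:ℝ) < n i := by exact_mod_cast hpos i
    have habs : |(n i:ℝ) - (Q - (n i:ℝ)^2)/((N:ℝ)-n i)| = 0 := by
      have hNN : (0:ℝ) < N*N := by positivity
      have := div_eq_zero_iff.mp hz
      rcases this with h | h
      · rcases mul_eq_zero.mp h with h' | h'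
        · linarith
        · exact h'
      · linarith
    have heq : (n i:ℝ) = (Q - (n i:ℝ)^2)/((N:ℝ)-n i) := by
      have := abs_eq_zero.mp habs
      linarith
    have hd : ((N:ℝ) - n i) ≠ 0 := by have := hsub i; linarith
    field_simp at heq
    nlinarith [heq]
  intro i j
  have : (n i : ℝ) * N = (n j : ℝ) * N := by rw [hkey i, hkey j]
  have : (n i : ℝ) = n j := by
    field_simp at this
    linarith
  exact_mod_cast this
end

section
/- Moving a single point from cluster A to cluster B changes the leave-one-out baseline S_A by at most 1 in absolute value: with p = ∑_{j≠A} n_j², d = N − n_A ≥ 1, n_B ≥ 0, and p satisfying n_B² ≤ p ≤ d², one has |(p + 2n_B + 1)/(d+1) − p/d| ≤ 1. -/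
/-- Moving a single point from cluster `A` to cluster `B` changes the leave-one-out
baseline `S_A` by at most `1` in absolute value: with `p = ∑_{j ≠ A} n j ^ 2`,
`d = N - n A ≥ 1`, `n B ≥ 0`, and `n B ^ 2 ≤ p ≤ d ^ 2`, one has
`|(p + 2 * n B + 1) / (d + 1) - p / d| ≤ 1`. -/
theorem mas_deltaSA_le_one (d : ℕ) (hd : 1 ≤ d) (nB : ℕ) (p : ℝ)
    (hp1 : (nB : ℝ) ^ 2 ≤ p) (hp2 : p ≤ (d : ℝ) ^ 2) :
    |(p + 2 * (nB : ℝ) + 1) / ((d : ℝ) + 1) - p / d| ≤ 1 := by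
  have hd' : (1:ℝ) ≤ d := by exact_mod_cast hd
  have h0 : (0:ℝ) < d := by linarith
  have h1 : (0:ℝ) < (d:ℝ) + 1 := by linarith
  have hB : (0:ℝ) ≤ nB := Nat.cast_nonneg nB
  rw [div_sub_div _ _ (by positivity) h0.ne', abs_div,
    abs_of_pos (show (0:ℝ) < ((d:ℝ)+1)*d by positivity), div_le_one (by positivity), abs_le]
  constructor <;> nlinarith [sq_nonneg ((nB:ℝ) - d)]
end

section
/- If all reassignments are confined to active clusters of total mass μN, then the total change in Q = ∑_j n_j² satisfies |ΔQ| ≤ μ²N², and consequently the inactive clusters' contribution to the Mass Agreement Score changes by at most μ(1−μ); combined with the active contribution, |ΔU| ≤ μ(2−μ). -/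
open Finset

/-- The per-cluster contribution to the Mass Agreement Score. -/
noncomputable def masTerm (K : ℕ) (N : ℕ) (n : Fin K → ℕ) (i : Fin K) : ℝ :=
  ((n i : ℝ) / N) *
    (1 - |(n i : ℝ) - ((∑ j, (n j : ℝ) ^ 2) - (n i : ℝ) ^ 2) / ((N : ℝ) - n i)| / N)

private lemma sum_sq_le_sq_sum' {ι : Type*} (s : Finset ι) (f : ι → ℝ)
    (h : ∀ i ∈ s, 0 ≤ f i) : ∑ i ∈ s, f i ^ 2 ≤ (∑ i ∈ s, f i) ^ 2 := by
  calc ∑ i ∈ s, f i ^ 2 ≤ ∑ i ∈ s, f i * (∑ j ∈ s, f j) := by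
        apply Finset.sum_le_sum
        intro i hi
        rw [sq]
        exact mul_le_mul_of_nonneg_left (Finset.single_le_sum h hi) (h i hi)
    _ = (∑ i ∈ s, f i) ^ 2 := by rw [← Finset.sum_mul, sq]

private lemma masTerm_bounds (K N : ℕ) (hN : 0 < N) (n : Fin K → ℕ)
    (hsum : ∑ i, n i = N) (i : Fin K) :
    0 ≤ masTerm K N n i ∧ masTerm K N n i ≤ (n i : ℝ) / N := by
  have hNR : (0 : ℝ) < N := by exact_mod_cast hN
  have hsumR : ∑ j, (n j : ℝ) = N := by exact_mod_cast congrArg (Nat.cast (R := ℝ)) hsum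
  set a : ℝ := (n i : ℝ) with ha_def
  have ha0 : 0 ≤ a := Nat.cast_nonneg _
  have haN : a ≤ N := by
    rw [← hsumR]
    exact Finset.single_le_sum (f := fun j => (n j : ℝ)) (fun j _ => Nat.cast_nonneg _)
      (mem_univ i)
  have hrest : ∑ j ∈ univ.erase i, (n j : ℝ) = N - a := by
    rw [Finset.sum_erase_eq_sub (mem_univ i), hsumR]
  have hQ : (∑ j, (n j : ℝ) ^ 2) - a ^ 2 = ∑ j ∈ univ.erase i, (n j : ℝ) ^ 2 := by
    rw [Finset.sum_erase_eq_sub (mem_univ i)]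
  have h1 : 0 ≤ (∑ j, (n j : ℝ) ^ 2) - a ^ 2 := by
    rw [hQ]; exact Finset.sum_nonneg fun j _ => sq_nonneg _
  have h2 : (∑ j, (n j : ℝ) ^ 2) - a ^ 2 ≤ (N - a) ^ 2 := by
    rw [hQ, ← hrest]
    exact sum_sq_le_sq_sum' _ _ fun j _ => Nat.cast_nonneg _
  rcases eq_or_lt_of_le haN with heq | hlt
  · have hz : (N : ℝ) - (n i : ℝ) = 0 := by rw [← ha_def, heq]; ring
    have : masTerm K N n i = 0 := by
      rw [masTerm, hz, div_zero, sub_zero, ← ha_def, heq, abs_of_nonneg hNR.le,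
        div_self hNR.ne']
      ring
    rw [this]
    exact ⟨le_refl 0, div_nonneg ha0 hNR.le⟩
  · have hden : 0 < (N : ℝ) - a := by linarith
    have hS0 : 0 ≤ ((∑ j, (n j : ℝ) ^ 2) - a ^ 2) / ((N : ℝ) - a) := div_nonneg h1 hden.le
    have hS1 : ((∑ j, (n j : ℝ) ^ 2) - a ^ 2) / ((N : ℝ) - a) ≤ N - a := by
      rw [div_le_iff₀ hden]
      nlinarith
    set Sv : ℝ := ((∑ j, (n j : ℝ) ^ 2) - a ^ 2) / ((N : ℝ) - a)
    have habs : |a - Sv| ≤ N := abs_le.mpr ⟨by linarith, by linarith⟩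
    have hf0 : 0 ≤ 1 - |a - Sv| / N := by
      rw [sub_nonneg]
      exact (div_le_one hNR).mpr habs
    have hf1 : 1 - |a - Sv| / N ≤ 1 := by
      have : 0 ≤ |a - Sv| / N := div_nonneg (abs_nonneg _) hNR.le
      linarith
    have hmt : masTerm K N n i = a / N * (1 - |a - Sv| / N) := rfl
    constructor
    · rw [hmt]; exact mul_nonneg (div_nonneg ha0 hNR.le) hf0
    · rw [hmt]
      calc a / N * (1 - |a - Sv| / N) ≤ a / N * 1 :=
            mul_le_mul_of_nonneg_left hf1 (div_nonneg ha0 hNR.le)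
        _ = a / N := mul_one _

private lemma masTerm_diff (K N : ℕ) (hN : 0 < N) (n n' : Fin K → ℕ) (i : Fin K)
    (hi : n' i = n i) (hlt : (n i : ℝ) < N) :
    |masTerm K N n' i - masTerm K N n i| ≤
      (n i : ℝ) * |(∑ j, (n' j : ℝ) ^ 2) - ∑ j, (n j : ℝ) ^ 2| /
        ((N : ℝ) ^ 2 * ((N : ℝ) - n i)) := by
  have hNR : (0 : ℝ) < N := by exact_mod_cast hN
  set a : ℝ := (n i : ℝ) with ha_def
  have ha0 : 0 ≤ a := Nat.cast_nonneg _
  have hden : 0 < (N : ℝ) - a := by linarith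
  set Q : ℝ := ∑ j, (n j : ℝ) ^ 2
  set Q' : ℝ := ∑ j, (n' j : ℝ) ^ 2
  set Sv : ℝ := (Q - a ^ 2) / ((N : ℝ) - a)
  set Sv' : ℝ := (Q' - a ^ 2) / ((N : ℝ) - a)
  have hdiff : masTerm K N n' i - masTerm K N n i =
      a / N ^ 2 * (|a - Sv| - |a - Sv'|) := by
    rw [masTerm, masTerm, hi]
    ring
  rw [hdiff, abs_mul]
  have h1 : |a / (N : ℝ) ^ 2| = a / N ^ 2 := abs_of_nonneg (div_nonneg ha0 (by positivity))
  have h2 : |(|a - Sv| - |a - Sv'|)| ≤ |Sv' - Sv| := by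
    have h0 := abs_abs_sub_abs_le_abs_sub (a - Sv) (a - Sv')
    have h3 : (a - Sv) - (a - Sv') = Sv' - Sv := by ring
    rwa [h3] at h0
  have h4 : |Sv' - Sv| = |Q' - Q| / ((N : ℝ) - a) := by
    have h5 : Sv' - Sv = (Q' - Q) / ((N : ℝ) - a) := by
      simp only [Sv, Sv']
      ring
    rw [h5, abs_div, abs_of_pos hden]
  calc |a / (N : ℝ) ^ 2| * |(|a - Sv| - |a - Sv'|)| ≤
        (a / N ^ 2) * (|Q' - Q| / ((N : ℝ) - a)) := by
        rw [h1]
        exact mul_le_mul_of_nonneg_left (h4 ▸ h2) (div_nonneg ha0 (by positivity))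
    _ = a * |Q' - Q| / ((N : ℝ) ^ 2 * ((N : ℝ) - a)) := by
        field_simp

/-- If all reassignments are confined to active clusters of total mass `μ * N`, then
the total change in `Q = ∑ j, n j ^ 2` satisfies `|ΔQ| ≤ μ ^ 2 * N ^ 2`, the inactive
clusters' contribution to the Mass Agreement Score changes by at most `μ * (1 - μ)`,
and combined with the active contribution, `|ΔU| ≤ μ * (2 - μ)`. -/
theorem mas_confined_reassignment_stability (K N : ℕ) (hN : 0 < N) (μ : ℝ)
    (hμ0 : 0 ≤ μ) (hμ1 : μ ≤ 1) (S : Finset (Fin K)) (n n' : Fin K → ℕ)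
    (hsum : ∑ i, n i = N) (hsum' : ∑ i, n' i = N)
    (hfix : ∀ i ∉ S, n' i = n i)
    (hmass : ∑ i ∈ S, (n i : ℝ) = μ * N) :
    |(∑ j, (n' j : ℝ) ^ 2) - (∑ j, (n j : ℝ) ^ 2)| ≤ μ ^ 2 * N ^ 2 ∧
    |(∑ i ∈ Sᶜ, masTerm K N n' i) - ∑ i ∈ Sᶜ, masTerm K N n i| ≤ μ * (1 - μ) ∧
    |(∑ i, masTerm K N n' i) - ∑ i, masTerm K N n i| ≤ μ * (2 - μ) := by
  have hNR : (0 : ℝ) < N := by exact_mod_cast hN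
  have hsumR : ∑ j, (n j : ℝ) = N := by exact_mod_cast congrArg (Nat.cast (R := ℝ)) hsum
  have hsumR' : ∑ j, (n' j : ℝ) = N := by exact_mod_cast congrArg (Nat.cast (R := ℝ)) hsum'
  have hcomplfix : ∑ i ∈ Sᶜ, (n' i : ℝ) = ∑ i ∈ Sᶜ, (n i : ℝ) :=
    Finset.sum_congr rfl fun i hi => by rw [hfix i (Finset.mem_compl.mp hi)]
  have hcomplfix2 : ∑ i ∈ Sᶜ, (n' i : ℝ) ^ 2 = ∑ i ∈ Sᶜ, (n i : ℝ) ^ 2 :=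
    Finset.sum_congr rfl fun i hi => by rw [hfix i (Finset.mem_compl.mp hi)]
  have hsplit : ∑ i ∈ S, (n i : ℝ) + ∑ i ∈ Sᶜ, (n i : ℝ) = N := by
    rw [Finset.sum_add_sum_compl, hsumR]
  have hsplit' : ∑ i ∈ S, (n' i : ℝ) + ∑ i ∈ Sᶜ, (n' i : ℝ) = N := by
    rw [Finset.sum_add_sum_compl, hsumR']
  have hmass' : ∑ i ∈ S, (n' i : ℝ) = μ * N := by
    rw [hcomplfix] at hsplit'
    linarith
  -- Part 1
  have hQsplit : (∑ j, (n' j : ℝ) ^ 2) - (∑ j, (n j : ℝ) ^ 2) =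
      (∑ i ∈ S, (n' i : ℝ) ^ 2) - ∑ i ∈ S, (n i : ℝ) ^ 2 := by
    rw [← Finset.sum_add_sum_compl S fun j => (n' j : ℝ) ^ 2,
      ← Finset.sum_add_sum_compl S fun j => (n j : ℝ) ^ 2, hcomplfix2]
    ring
  have hA0 : 0 ≤ ∑ i ∈ S, (n' i : ℝ) ^ 2 := Finset.sum_nonneg fun i _ => sq_nonneg _
  have hB0 : 0 ≤ ∑ i ∈ S, (n i : ℝ) ^ 2 := Finset.sum_nonneg fun i _ => sq_nonneg _
  have hA1 : ∑ i ∈ S, (n' i : ℝ) ^ 2 ≤ μ ^ 2 * N ^ 2 := by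
    have := sum_sq_le_sq_sum' S (fun i => (n' i : ℝ)) fun i _ => Nat.cast_nonneg _
    rw [hmass'] at this
    calc ∑ i ∈ S, (n' i : ℝ) ^ 2 ≤ (μ * N) ^ 2 := this
      _ = μ ^ 2 * N ^ 2 := by ring
  have hB1 : ∑ i ∈ S, (n i : ℝ) ^ 2 ≤ μ ^ 2 * N ^ 2 := by
    have := sum_sq_le_sq_sum' S (fun i => (n i : ℝ)) fun i _ => Nat.cast_nonneg _
    rw [hmass] at this
    calc ∑ i ∈ S, (n i : ℝ) ^ 2 ≤ (μ * N) ^ 2 := this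
      _ = μ ^ 2 * N ^ 2 := by ring
  have part1 : |(∑ j, (n' j : ℝ) ^ 2) - (∑ j, (n j : ℝ) ^ 2)| ≤ μ ^ 2 * N ^ 2 := by
    rw [hQsplit]
    exact abs_le.mpr ⟨by linarith, by linarith⟩
  refine ⟨part1, ?_⟩
  by_cases hz : ∑ i ∈ S, n i = 0
  · -- degenerate case: nothing moves
    have hSsum' : ∑ i ∈ S, n' i = ∑ i ∈ S, n i := by
      have h1 : ∑ i ∈ S, n' i + ∑ i ∈ Sᶜ, n' i = N := by
        rw [Finset.sum_add_sum_compl, hsum']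
      have h2 : ∑ i ∈ S, n i + ∑ i ∈ Sᶜ, n i = N := by
        rw [Finset.sum_add_sum_compl, hsum]
      have h3 : ∑ i ∈ Sᶜ, n' i = ∑ i ∈ Sᶜ, n i :=
        Finset.sum_congr rfl fun i hi => hfix i (Finset.mem_compl.mp hi)
      omega
    have hnn' : n' = n := by
      funext i
      by_cases hi : i ∈ S
      · have h1 : n i = 0 := by
          have := (Finset.sum_eq_zero_iff).mp hz i hi
          exact this
        have h2 : n' i = 0 := by
          have := (Finset.sum_eq_zero_iff).mp (hSsum'.trans hz) i hi
          exact this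
        rw [h1, h2]
      · exact hfix i hi
    have hμz : μ = 0 := by
      have hs0 : ∑ i ∈ S, (n i : ℝ) = 0 :=
        Finset.sum_eq_zero fun i hi => by
          exact_mod_cast (Finset.sum_eq_zero_iff).mp hz i hi
      have hμN : μ * N = 0 := by rw [← hmass, hs0]
      rcases mul_eq_zero.mp hμN with h | h
      · exact h
      · exact absurd h hNR.ne'
    subst hnn'
    simp [hμz]
  · -- nondegenerate case
    have hzpos : 0 < ∑ i ∈ S, n i := Nat.pos_of_ne_zero hz
    have hμNpos : 0 < μ * N := by
      rw [← hmass]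
      exact_mod_cast hzpos
    have hμpos : 0 < μ := by
      by_contra h
      push_neg at h
      nlinarith
    have hcompl : ∑ i ∈ Sᶜ, (n i : ℝ) = (1 - μ) * N := by
      rw [hmass] at hsplit
      linarith
    set Q : ℝ := ∑ j, (n j : ℝ) ^ 2 with hQdef
    set Q' : ℝ := ∑ j, (n' j : ℝ) ^ 2 with hQ'def
    set D : ℝ := |Q' - Q| with hDdef
    have hD0 : 0 ≤ D := abs_nonneg _
    have hD : D ≤ μ ^ 2 * N ^ 2 := part1
    -- per-element bound on Sᶜ
    have hperel : ∀ i ∈ Sᶜ, |masTerm K N n' i - masTerm K N n i| ≤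
        (n i : ℝ) * (D / ((N : ℝ) ^ 2 * (μ * N))) := by
      intro i hi
      have hiS : i ∉ S := Finset.mem_compl.mp hi
      have hle : (n i : ℝ) ≤ (1 - μ) * N := by
        rw [← hcompl]
        exact Finset.single_le_sum (f := fun j => (n j : ℝ)) (fun j _ => Nat.cast_nonneg _) hi
      have hdenge : μ * N ≤ (N : ℝ) - n i := by nlinarith
      have hdenpos : 0 < (N : ℝ) - n i := lt_of_lt_of_le hμNpos hdenge
      have hlt : (n i : ℝ) < N := by linarith
      have h1 := masTerm_diff K N hN n n' i (hfix i hiS) hlt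
      refine h1.trans ?_
      have hni0 : (0 : ℝ) ≤ n i := Nat.cast_nonneg _
      have hstep : (n i : ℝ) * D / ((N : ℝ) ^ 2 * ((N : ℝ) - n i)) ≤
          (n i : ℝ) * D / ((N : ℝ) ^ 2 * (μ * N)) := by
        apply div_le_div_of_nonneg_left (mul_nonneg hni0 hD0) (by positivity)
        exact mul_le_mul_of_nonneg_left hdenge (by positivity)
      calc (n i : ℝ) * |(∑ j, (n' j : ℝ) ^ 2) - ∑ j, (n j : ℝ) ^ 2| /
            ((N : ℝ) ^ 2 * ((N : ℝ) - n i))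
          = (n i : ℝ) * D / ((N : ℝ) ^ 2 * ((N : ℝ) - n i)) := rfl
        _ ≤ (n i : ℝ) * D / ((N : ℝ) ^ 2 * (μ * N)) := hstep
        _ = (n i : ℝ) * (D / ((N : ℝ) ^ 2 * (μ * N))) := by rw [mul_div_assoc]
    have part2 : |(∑ i ∈ Sᶜ, masTerm K N n' i) - ∑ i ∈ Sᶜ, masTerm K N n i| ≤ μ * (1 - μ) := by
      calc |(∑ i ∈ Sᶜ, masTerm K N n' i) - ∑ i ∈ Sᶜ, masTerm K N n i|
          = |∑ i ∈ Sᶜ, (masTerm K N n' i - masTerm K N n i)| := by rw [Finset.sum_sub_distrib]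
        _ ≤ ∑ i ∈ Sᶜ, |masTerm K N n' i - masTerm K N n i| := Finset.abs_sum_le_sum_abs _ _
        _ ≤ ∑ i ∈ Sᶜ, (n i : ℝ) * (D / ((N : ℝ) ^ 2 * (μ * N))) := Finset.sum_le_sum hperel
        _ = ((1 - μ) * N) * (D / ((N : ℝ) ^ 2 * (μ * N))) := by
            rw [← Finset.sum_mul, hcompl]
        _ ≤ μ * (1 - μ) := by
            rw [mul_div_assoc', div_le_iff₀ (by positivity)]
            nlinarith [mul_le_mul_of_nonneg_left hD (mul_nonneg (by linarith : (0:ℝ) ≤ 1 - μ) hNR.le)]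
    refine ⟨part2, ?_⟩
    -- active part
    have hb := masTerm_bounds K N hN n hsum
    have hb' := masTerm_bounds K N hN n' hsum'
    have hX0 : 0 ≤ ∑ i ∈ S, masTerm K N n i := Finset.sum_nonneg fun i _ => (hb i).1
    have hX0' : 0 ≤ ∑ i ∈ S, masTerm K N n' i := Finset.sum_nonneg fun i _ => (hb' i).1
    have hX1 : ∑ i ∈ S, masTerm K N n i ≤ μ := by
      calc ∑ i ∈ S, masTerm K N n i ≤ ∑ i ∈ S, (n i : ℝ) / N :=
            Finset.sum_le_sum fun i _ => (hb i).2
        _ = (∑ i ∈ S, (n i : ℝ)) / N := by rw [Finset.sum_div]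
        _ = μ := by rw [hmass, mul_div_assoc, div_self hNR.ne', mul_one]
    have hX1' : ∑ i ∈ S, masTerm K N n' i ≤ μ := by
      calc ∑ i ∈ S, masTerm K N n' i ≤ ∑ i ∈ S, (n' i : ℝ) / N :=
            Finset.sum_le_sum fun i _ => (hb' i).2
        _ = (∑ i ∈ S, (n' i : ℝ)) / N := by rw [Finset.sum_div]
        _ = μ := by rw [hmass', mul_div_assoc, div_self hNR.ne', mul_one]
    have hactive : |(∑ i ∈ S, masTerm K N n' i) - ∑ i ∈ S, masTerm K N n i| ≤ μ :=
      abs_le.mpr ⟨by linarith, by linarith⟩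
    have hsplitU : (∑ i, masTerm K N n i) =
        (∑ i ∈ S, masTerm K N n i) + ∑ i ∈ Sᶜ, masTerm K N n i :=
      (Finset.sum_add_sum_compl S _).symm
    have hsplitU' : (∑ i, masTerm K N n' i) =
        (∑ i ∈ S, masTerm K N n' i) + ∑ i ∈ Sᶜ, masTerm K N n' i :=
      (Finset.sum_add_sum_compl S _).symm
    calc |(∑ i, masTerm K N n' i) - ∑ i, masTerm K N n i|
        = |((∑ i ∈ S, masTerm K N n' i) - ∑ i ∈ S, masTerm K N n i) +
            ((∑ i ∈ Sᶜ, masTerm K N n' i) - ∑ i ∈ Sᶜ, masTerm K N n i)| := by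
          rw [hsplitU, hsplitU']; ring_nf
      _ ≤ |(∑ i ∈ S, masTerm K N n' i) - ∑ i ∈ S, masTerm K N n i| +
            |(∑ i ∈ Sᶜ, masTerm K N n' i) - ∑ i ∈ Sᶜ, masTerm K N n i| := abs_add_le _ _
      _ ≤ μ + μ * (1 - μ) := add_le_add hactive part2
      _ = μ * (2 - μ) := by ring
end
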